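/- For every nonnegative integer k and positive integer N, the reverse Bessel polynomials satisfy p_{k+N}(x) = \sum_{i=N}^{2N-1} a_{i-N}(N,x) \sum_{l=0}^{k} \binom{k}{l} 2^l (i/2 + l - 1)_l p_{k-l}(x), where (y)_l = y(y-1)\cdots(y-l+1) is the falling factorial and the a_j(N,x) are the coefficients satisfying a_0(N,x) = x^N, a_{N-1}(N,x) = (2N-3)!! x, and the recurrence a_{i-N}(N+1,x) = (i-1)a_{i-N-1}(N,x) + x a_{i-N}(N,x) for N+1 \le i \le 2N-1, with a_0(N+1,x) = x a_0(N,x) and a_N(N+1,x) = (2N-1)a_{N-1}(N,x). -/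

import Mathlib

/-!
Pass to exponential generating functions in `t`. The three-term recurrence
`p_{n+2} = (2n+1) p_{n+1} + x² p_n`, read off the explicit coefficients, says that
`P = ∑ pₙ(x) tⁿ/n!` solves `(1 - 2t) P'' = P' + x² P`; from this, uniqueness for linear
first-order equations gives `P' = x (1 - 2t)^(-1/2) P`. The inner sum over `l` is `k!` times the
`t^k` coefficient of `Sᵢ = (1 - 2t)^(-i/2) P`, and since `(1 - 2t)^a (1 - 2t)^b = (1 - 2t)^(a+b)`
(Chu–Vandermonde), `Sᵢ' = i S_{i+2} + x S_{i+1}`. Differentiating `N` times and collecting terms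
with the recurrence for `a_j(N, x)` gives `P^(N) = ∑ a_{i-N}(N, x) Sᵢ`, whose `t^k` coefficient is
the identity.
-/

open Finset Nat

/-- The reverse Bessel polynomial `p n`. -/
noncomputable def pB (n : ℕ) (x : ℝ) : ℝ :=
  if n = 0 then 1 else
    ∑ k ∈ Finset.Icc 1 n,
      ((2 * n - k - 1).factorial : ℝ) / (2 ^ (n - k) * (k - 1).factorial * (n - k).factorial) * x ^ k

open PowerSeries

namespace PowerSeries

theorem eq_zero_of_derivative_eq_mul {R : Type*} [CommRing R] [IsAddTorsionFree R]
    {F G : R⟦X⟧} (h : d⁄dX R G = F * G) (h0 : constantCoeff G = 0) : G = 0 := by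
  suffices ∀ n, ∀ m ≤ n, coeff m G = 0 from ext fun n => this n n le_rfl
  intro n
  induction n with
  | zero => simpa using h0
  | succ n ih =>
    intro m hm
    obtain hmn | rfl := Nat.lt_or_eq_of_le hm
    · exact ih m (by omega)
    have hcoeff : coeff (n + 1) G * (n + 1 : ℕ) = 0 := by
      rw [Nat.cast_succ, ← coeff_derivative, h, coeff_mul]
      exact sum_eq_zero fun p hp => by
        rw [ih p.2 (HasAntidiagonal.antidiagonal.snd_le hp), mul_zero]
    rw [mul_comm, ← nsmul_eq_mul] at hcoeff
    exact (smul_eq_zero.1 hcoeff).resolve_left n.succ_ne_zero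

section

variable {K : Type*} [Field K]

noncomputable def egf (f : ℕ → K) : K⟦X⟧ := mk fun n => f n / n !

@[simp] theorem coeff_egf (f : ℕ → K) (n : ℕ) : coeff n (egf f) = f n / n ! := coeff_mk _ _

variable [CharZero K]

theorem derivative_egf (f : ℕ → K) : d⁄dX K (egf f) = egf (fun n => f (n + 1)) := by
  ext n
  rw [coeff_derivative, coeff_egf, coeff_egf, Nat.factorial_succ]
  push_cast
  field_simp

theorem iterate_derivative_egf (f : ℕ → K) (N : ℕ) :
    (d⁄dX K)^[N] (egf f) = egf (fun n => f (n + N)) := by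
  induction N with
  | zero => rfl
  | succ N ih =>
    rw [Function.iterate_succ_apply', ih, derivative_egf]
    simp only [add_right_comm _ 1 N, add_assoc]

theorem X_mul_egf (f : ℕ → K) : X * egf f = egf (fun n => n * f (n - 1)) := by
  ext (_ | n)
  · simp
  · rw [coeff_succ_X_mul, coeff_egf, coeff_egf, Nat.factorial_succ]
    push_cast
    field_simp

theorem factorial_mul_coeff_egf_mul (f g : ℕ → K) (k : ℕ) :
    k ! * coeff k (egf f * egf g) =
      ∑ l ∈ range (k + 1), (k.choose l : K) * f l * g (k - l) := by
  rw [coeff_mul, Nat.sum_antidiagonal_eq_sum_range_succ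
    (fun i j => coeff i (egf f) * coeff j (egf g)), mul_sum]
  refine sum_congr rfl fun l hl => ?_
  rw [Nat.cast_choose K (Nat.lt_succ_iff.1 (mem_range.1 hl)), coeff_egf, coeff_egf]
  field_simp

noncomputable def oneSubTwoXPow (a : K) : K⟦X⟧ := rescale (-2) (binomialSeries K a)

theorem oneSubTwoXPow_add (a b : K) :
    oneSubTwoXPow (a + b) = oneSubTwoXPow a * oneSubTwoXPow b := by
  simp only [oneSubTwoXPow, binomialSeries_add, map_mul]

theorem oneSubTwoXPow_zero : oneSubTwoXPow (0 : K) = 1 := by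
  simp [oneSubTwoXPow]

theorem oneSubTwoXPow_one : oneSubTwoXPow (1 : K) = 1 - C 2 * X := by
  have h := binomialSeries_nat (R := K) (A := K) 1
  rw [Nat.cast_one] at h
  simp [oneSubTwoXPow, h, rescale_X, sub_eq_add_neg]

theorem coeff_oneSubTwoXPow (a : K) (n : ℕ) :
    coeff n (oneSubTwoXPow a) = (-2) ^ n * Ring.choose a n := by
  simp [oneSubTwoXPow]

theorem derivative_oneSubTwoXPow (a : K) :
    d⁄dX K (oneSubTwoXPow a) = C (-2 * a) * oneSubTwoXPow (a - 1) := by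
  ext n
  have hchoose : (n + 1 : K) * Ring.choose a (n + 1) = a * Ring.choose (a - 1) n := by
    simpa [Ring.choose_one_right, nsmul_eq_mul] using
      Ring.choose_smul_choose a (show 1 ≤ n + 1 by omega)
  rw [coeff_derivative, coeff_C_mul, coeff_oneSubTwoXPow, coeff_oneSubTwoXPow, pow_succ]
  linear_combination (-2 * (-2) ^ n) * hchoose

theorem oneSubTwoXPow_neg (a : K) :
    oneSubTwoXPow (-a) = egf fun n => 2 ^ n * (descPochhammer K n).eval (a + n - 1) := by
  ext n
  rw [coeff_oneSubTwoXPow, coeff_egf, Ring.choose_neg, Units.smul_def, zsmul_eq_mul,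
    Int.cast_negOnePow_natCast, descPochhammer_eval_eq_ascPochhammer,
    ← Polynomial.ascPochhammer_smeval_eq_eval,
    ← Polynomial.descPochhammer_smeval_eq_ascPochhammer,
    Ring.descPochhammer_eq_factorial_smul_choose, nsmul_eq_mul, mul_left_comm (2 ^ n : K),
    mul_div_cancel_left₀ _ (Nat.cast_ne_zero.2 n.factorial_ne_zero), ← mul_assoc, ← mul_pow]
  norm_num

end

end PowerSeries

theorem sum_smul_eq_of_recurrence {K M : Type*} [CommSemiring K] [AddCommMonoid M] [Module K M]
    (x : K) (c c' : ℕ → K) (S : ℕ → M) (n : ℕ)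
    (h0 : c' 0 = x * c 0) (htop : c' (n + 1) = (2 * n + 1) * c n)
    (hmid : ∀ m < n, c' (m + 1) = (n + 1 + m) * c m + x * c (m + 1)) :
    ∑ m ∈ range (n + 1),
        c m • ((n + 1 + m : K) • S (n + 1 + m + 2) + x • S (n + 1 + m + 1)) =
      ∑ m ∈ range (n + 2), c' m • S (n + 2 + m) := by
  have hmid' : ∀ m ∈ range n, c' (m + 1) • S (n + 2 + (m + 1)) =
      c m • (n + 1 + m : K) • S (n + 1 + m + 2) +
        c (m + 1) • x • S (n + 1 + (m + 1) + 1) := by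
    intro m hm
    rw [hmid m (mem_range.1 hm), show n + 1 + (m + 1) + 1 = n + 1 + m + 2 by omega,
      show n + 2 + (m + 1) = n + 1 + m + 2 by omega]
    module
  rw [sum_range_succ' (fun m => c' m • S (n + 2 + m)),
    sum_range_succ (fun m => c' (m + 1) • S (n + 2 + (m + 1))), sum_congr rfl hmid',
    sum_add_distrib, h0, htop]
  simp only [smul_add, sum_add_distrib]
  rw [sum_range_succ (fun m => c m • (n + 1 + m : K) • S (n + 1 + m + 2)),
    sum_range_succ' (fun m => c m • x • S (n + 1 + m + 1)),
    show n + 1 + n + 2 = n + 2 + (n + 1) by omega, show n + 1 + 0 + 1 = n + 2 + 0 by omega]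
  module

noncomputable def besselCoeff (i j : ℕ) : ℝ := ((i + 2 * j)! : ℝ) / (2 ^ j * i ! * j !)

theorem besselCoeff_zero_right (i : ℕ) : besselCoeff i 0 = 1 := by
  simp [besselCoeff, (Nat.factorial_pos i).ne']

theorem besselCoeff_succ_right (i j : ℕ) :
    besselCoeff i (j + 1) = (2 * (i + j) + 1) * besselCoeff i j +
      if 2 ≤ i then besselCoeff (i - 2) (j + 1) else 0 := by
  obtain _ | _ | i := i
  · rw [besselCoeff, besselCoeff, if_neg (by omega),
      show 0 + 2 * (j + 1) = 0 + 2 * j + 1 + 1 by ring]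
    push_cast [Nat.factorial_succ, pow_succ]
    field_simp
    ring
  · rw [besselCoeff, besselCoeff, if_neg (by omega),
      show 0 + 1 + 2 * (j + 1) = 0 + 1 + 2 * j + 1 + 1 by ring]
    push_cast [Nat.factorial_succ, pow_succ]
    field_simp
    ring
  · rw [besselCoeff, besselCoeff, besselCoeff, if_pos (by omega), show i + 1 + 1 - 2 = i by omega,
      show i + 1 + 1 + 2 * (j + 1) = i + 2 * (j + 1) + 1 + 1 by ring,
      show i + 1 + 1 + 2 * j = i + 2 * (j + 1) by ring]
    push_cast [Nat.factorial_succ, pow_succ]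
    field_simp
    ring

theorem pB_zero (x : ℝ) : pB 0 x = 1 := if_pos rfl

theorem pB_succ (n : ℕ) (x : ℝ) :
    pB (n + 1) x = x * ∑ p ∈ antidiagonal n, besselCoeff p.1 p.2 * x ^ p.1 := by
  rw [pB, if_neg n.succ_ne_zero, Nat.sum_antidiagonal_eq_sum_range_succ
    (fun i j => besselCoeff i j * x ^ i), mul_sum, ← Ico_add_one_right_eq_Icc,
    sum_Ico_eq_sum_range, Nat.add_sub_cancel]
  refine sum_congr rfl fun i hi => ?_
  have hin : i ≤ n := Nat.lt_succ_iff.1 (mem_range.1 hi)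
  rw [besselCoeff, show 2 * (n + 1) - (1 + i) - 1 = i + 2 * (n - i) by omega,
    show n + 1 - (1 + i) = n - i by omega, show 1 + i - 1 = i by omega, add_comm 1 i, pow_succ]
  ring

theorem sum_besselCoeff_add_two (n : ℕ) (x : ℝ) :
    ∑ p ∈ antidiagonal (n + 2), besselCoeff p.1 p.2 * x ^ p.1 =
      (2 * n + 3) * ∑ p ∈ antidiagonal (n + 1), besselCoeff p.1 p.2 * x ^ p.1 +
        x ^ 2 * ∑ p ∈ antidiagonal n, besselCoeff p.1 p.2 * x ^ p.1 := by
  set g : ℕ × ℕ → ℝ := fun p =>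
    if 2 ≤ p.1 then besselCoeff (p.1 - 2) p.2 * x ^ p.1 else 0
  have hg : ∑ p ∈ antidiagonal (n + 2), g p =
      x ^ 2 * ∑ p ∈ antidiagonal n, besselCoeff p.1 p.2 * x ^ p.1 := by
    simp only [g, Nat.sum_antidiagonal_succ, mul_sum]
    norm_num [pow_succ]
    exact sum_congr rfl fun p _ => by rw [show p.1 + 1 + 1 - 2 = p.1 by omega]; ring
  have htop : g (n + 2, 0) = x ^ (n + 2) := by simp [g, besselCoeff_zero_right]
  rw [← hg, Nat.sum_antidiagonal_succ' (f := g), Nat.sum_antidiagonal_succ', htop,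
    besselCoeff_zero_right, one_mul, mul_sum, add_left_comm, ← sum_add_distrib]
  refine congrArg _ (sum_congr rfl fun p hp => ?_)
  have hp' : (p.1 + p.2 : ℝ) = n + 1 := by exact_mod_cast HasAntidiagonal.mem_antidiagonal.1 hp
  simp only [g]
  rw [besselCoeff_succ_right, hp']
  split_ifs <;> ring

theorem pB_add_two (n : ℕ) (x : ℝ) :
    pB (n + 2) x = (2 * n + 1) * pB (n + 1) x + x ^ 2 * pB n x := by
  obtain _ | n := n
  · simp [pB_succ, pB_zero, sum_antidiagonal_succ, besselCoeff]
    ring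
  rw [pB_succ, pB_succ, pB_succ, sum_besselCoeff_add_two]
  push_cast
  ring

noncomputable def besselSeries (x : ℝ) : ℝ⟦X⟧ := egf fun n => pB n x

theorem besselSeries_ode (x : ℝ) :
    oneSubTwoXPow 1 * d⁄dX ℝ (d⁄dX ℝ (besselSeries x)) =
      d⁄dX ℝ (besselSeries x) + C x ^ 2 * besselSeries x := by
  rw [oneSubTwoXPow_one, besselSeries, derivative_egf, derivative_egf, sub_mul, one_mul,
    mul_assoc, X_mul_egf]
  ext n
  simp only [map_sub, map_add, ← map_pow, coeff_C_mul, coeff_egf]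
  rcases n with _ | n
  · simp [pB_add_two 0]
  · rw [pB_add_two (n + 1), Nat.factorial_succ]
    push_cast
    field_simp
    ring

theorem derivative_besselSeries (x : ℝ) :
    d⁄dX ℝ (besselSeries x) = C x * oneSubTwoXPow (-1 / 2) * besselSeries x := by
  set P := besselSeries x
  set R := oneSubTwoXPow (-1 / 2 : ℝ)
  have hR : d⁄dX ℝ R = oneSubTwoXPow (-3 / 2) := by
    rw [derivative_oneSubTwoXPow]; norm_num
  have hRR : R * R = oneSubTwoXPow (-1) := by rw [← oneSubTwoXPow_add]; norm_num
  have hR3 : oneSubTwoXPow (-1) * R = oneSubTwoXPow (-3 / 2) := by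
    rw [← oneSubTwoXPow_add]; norm_num
  have hinv : oneSubTwoXPow (-1) * oneSubTwoXPow (1 : ℝ) = 1 := by
    rw [← oneSubTwoXPow_add]; norm_num [oneSubTwoXPow_zero]
  have hG : d⁄dX ℝ (d⁄dX ℝ P - C x * R * P) =
      (oneSubTwoXPow (-1) - C x * R) * (d⁄dX ℝ P - C x * R * P) := by
    simp only [map_sub, Derivation.leibniz, smul_eq_mul, derivative_C, hR]
    linear_combination oneSubTwoXPow (-1) * besselSeries_ode x
      - d⁄dX ℝ (d⁄dX ℝ P) * hinv + C x * P * hR3 - C x ^ 2 * P * hRR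
  have h0 : coeff 0 (d⁄dX ℝ P - C x * R * P) = 0 := by
    rw [map_sub, mul_assoc, coeff_C_mul, coeff_derivative, coeff_mul]
    simp [P, R, coeff_oneSubTwoXPow, besselSeries, pB_succ, pB_zero, besselCoeff_zero_right]
  exact sub_eq_zero.1
    (eq_zero_of_derivative_eq_mul hG (by rwa [← coeff_zero_eq_constantCoeff_apply]))

noncomputable def twistedBesselSeries (i : ℕ) (x : ℝ) : ℝ⟦X⟧ :=
  oneSubTwoXPow (-(i / 2 : ℝ)) * besselSeries x

theorem derivative_twistedBesselSeries (i : ℕ) (x : ℝ) :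
    d⁄dX ℝ (twistedBesselSeries i x) =
      (i : ℝ) • twistedBesselSeries (i + 2) x + x • twistedBesselSeries (i + 1) x := by
  have hadd : oneSubTwoXPow (-(i / 2 : ℝ)) * oneSubTwoXPow (-1 / 2) =
      oneSubTwoXPow (-((i + 1 : ℕ) / 2 : ℝ)) := by
    rw [← oneSubTwoXPow_add]; congr 1; push_cast; ring
  have hpow : -(i / 2 : ℝ) - 1 = -((i + 2 : ℕ) / 2) := by push_cast; ring
  have hcoef : -2 * -(i / 2 : ℝ) = i := by ring
  simp only [twistedBesselSeries, Derivation.leibniz, smul_eq_mul, derivative_besselSeries,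
    derivative_oneSubTwoXPow, hpow, hcoef, smul_eq_C_mul, ← hadd]
  ring

theorem iterate_derivative_besselSeries (x : ℝ) (c : ℕ → ℕ → ℝ) (hbase : c 0 0 = x)
    (h0 : ∀ n, c (n + 1) 0 = x * c n 0) (htop : ∀ n, c (n + 1) (n + 1) = (2 * n + 1) * c n n)
    (hmid : ∀ n m, m < n → c (n + 1) (m + 1) = (n + 1 + m) * c n m + x * c n (m + 1))
    (n : ℕ) :
    (d⁄dX ℝ)^[n + 1] (besselSeries x) =
      ∑ m ∈ range (n + 1), c n m • twistedBesselSeries (n + 1 + m) x := by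
  induction n with
  | zero =>
    rw [Function.iterate_one, derivative_besselSeries, sum_range_one, hbase, smul_eq_C_mul,
      twistedBesselSeries]
    norm_num [mul_assoc]
  | succ n ih =>
    rw [Function.iterate_succ_apply', ih, map_sum]
    simp only [Derivation.map_smul, derivative_twistedBesselSeries]
    push_cast
    exact sum_smul_eq_of_recurrence x (c n) (c (n + 1)) (twistedBesselSeries · x) n
      (h0 n) (htop n) (hmid n)

theorem factorial_mul_coeff_twistedBesselSeries (i k : ℕ) (x : ℝ) :
    k ! * coeff k (twistedBesselSeries i x) =
      ∑ l ∈ range (k + 1), (k.choose l : ℝ) * 2 ^ l *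
        (descPochhammer ℝ l).eval ((i : ℝ) / 2 + l - 1) * pB (k - l) x := by
  rw [twistedBesselSeries, oneSubTwoXPow_neg, besselSeries, factorial_mul_coeff_egf_mul]
  simp only [mul_assoc]

theorem reverse_bessel_main_identity_general
    (a : ℕ → ℕ → ℝ → ℝ)
    (ha0 : ∀ N : ℕ, 1 ≤ N → ∀ x : ℝ, a 0 N x = x ^ N)
    (hrec0 : ∀ N : ℕ, 1 ≤ N → ∀ x : ℝ, a 0 (N + 1) x = x * a 0 N x)
    (hrecTop : ∀ N : ℕ, 1 ≤ N → ∀ x : ℝ,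
      a N (N + 1) x = ((2 * N - 1 : ℕ) : ℝ) * a (N - 1) N x)
    (hrec : ∀ N : ℕ, 1 ≤ N → ∀ i : ℕ, N + 1 ≤ i → i ≤ 2 * N - 1 → ∀ x : ℝ,
      a (i - N) (N + 1) x = ((i - 1 : ℕ) : ℝ) * a (i - N - 1) N x + x * a (i - N) N x)
    (k N : ℕ) (hN : 1 ≤ N) (x : ℝ) :
    pB (k + N) x =
      ∑ i ∈ Finset.Icc N (2 * N - 1), a (i - N) N x *
        ∑ l ∈ Finset.range (k + 1),
          (k.choose l : ℝ) * 2 ^ l * (descPochhammer ℝ l).eval ((i : ℝ) / 2 + l - 1)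
            * pB (k - l) x := by
  obtain ⟨n, rfl⟩ : ∃ n, N = n + 1 := ⟨N - 1, by omega⟩
  have hseries := iterate_derivative_besselSeries x (fun n m => a m (n + 1) x)
    (by rw [ha0 1 le_rfl, pow_one]) (fun n => hrec0 (n + 1) (by omega) x)
    (fun n => by
      simpa [show 2 * (n + 1) - 1 = 2 * n + 1 by omega] using hrecTop (n + 1) (by omega) x)
    (fun n m hm => by
      have h := hrec (n + 1) (by omega) (n + 2 + m) (by omega) (by omega) x
      rwa [show n + 2 + m - (n + 1) = m + 1 by omega, show m + 1 - 1 = m by omega,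
        show n + 2 + m - 1 = n + 1 + m by omega, Nat.cast_add, Nat.cast_add, Nat.cast_one] at h)
    n
  have hcoeff := congrArg (fun F => (k ! : ℝ) * coeff k F) hseries
  have hk : (k ! : ℝ) ≠ 0 := Nat.cast_ne_zero.2 k.factorial_ne_zero
  simp only [besselSeries, iterate_derivative_egf, coeff_egf, map_sum, map_smul, smul_eq_mul,
    mul_div_cancel₀ _ hk, mul_sum] at hcoeff
  simp only [mul_left_comm (k ! : ℝ), factorial_mul_coeff_twistedBesselSeries] at hcoeff
  rw [show 2 * (n + 1) - 1 = n + 1 + n by omega, ← Ico_add_one_right_eq_Icc, sum_Ico_eq_sum_range,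
    show n + 1 + n + 1 - (n + 1) = n + 1 by omega]
  simpa using hcoeff

theorem reverse_bessel_main_identity
    (a : ℕ → ℕ → ℝ → ℝ)
    (ha0 : ∀ N : ℕ, 1 ≤ N → ∀ x : ℝ, a 0 N x = x ^ N)
    (haTop : ∀ N : ℕ, 1 ≤ N → ∀ x : ℝ,
      a (N - 1) N x = ((2 * N - 3 : ℕ).doubleFactorial : ℝ) * x)
    (hrec0 : ∀ N : ℕ, 1 ≤ N → ∀ x : ℝ, a 0 (N + 1) x = x * a 0 N x)
    (hrecTop : ∀ N : ℕ, 1 ≤ N → ∀ x : ℝ,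
      a N (N + 1) x = ((2 * N - 1 : ℕ) : ℝ) * a (N - 1) N x)
    (hrec : ∀ N : ℕ, 1 ≤ N → ∀ i : ℕ, N + 1 ≤ i → i ≤ 2 * N - 1 → ∀ x : ℝ,
      a (i - N) (N + 1) x = ((i - 1 : ℕ) : ℝ) * a (i - N - 1) N x + x * a (i - N) N x)
    (k N : ℕ) (hN : 1 ≤ N) (x : ℝ) :
    pB (k + N) x =
      ∑ i ∈ Finset.Icc N (2 * N - 1), a (i - N) N x *
        ∑ l ∈ Finset.range (k + 1),
          (k.choose l : ℝ) * 2 ^ l * (descPochhammer ℝ l).eval ((i : ℝ) / 2 + l - 1)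
            * pB (k - l) x :=
  reverse_bessel_main_identity_general a ha0 hrec0 hrecTop hrec k N hN x
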